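/- arXiv:2112.10956 — 3 statements merged into one kernel-verified Lean document; each statement's English description precedes it below -/
import Mathlib

section
/- Let n ≥ 1, s ∈ ℕ, x₀ ∈ ℝⁿ and r > 0. If a ∈ L¹(ℝⁿ; ℂ) is supported in the closed ball B(x₀, r) and satisfies the vanishing moment conditions ∫_{ℝⁿ} a(ξ) ξ^α dξ = 0 for every multi-index α with |α| ≤ s, then for every x ∈ ℝⁿ one has |â(x)| ≤ min{1, (2π r |x|)^{s+1}/(s+1)!} · ‖a‖_{L¹}. -/
open MeasureTheory Function Complex
open scoped Real Nat FourierTransform RealInnerProductSpace ComplexConjugate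

/-! The phase `exp (-2πi⟪ξ, x⟫)` is `exp (-2πi⟪x₀, x⟫)` times `exp (i u)` with
`u = -2π⟪ξ - x₀, x⟫`. Subtracting from `exp (i u)` its Taylor polynomial of degree `s` does not
change `𝓕 a x`, since that polynomial is a polynomial of total degree `≤ s` in `ξ`, which `a`
annihilates by the moment conditions. On the support of `a` the Taylor remainder is at most
`|u| ^ (s + 1) / (s + 1)! ≤ (2πr‖x‖) ^ (s + 1) / (s + 1)!`. -/

namespace Complex

noncomputable def expMulITaylorRemainder (m : ℕ) (u : ℝ) : ℂ :=
  exp (u * I) - ∑ k ∈ Finset.range m, (u * I) ^ k / k !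

theorem hasDerivAt_ofReal_mul_I_pow_div_factorial (k : ℕ) (u : ℝ) :
    HasDerivAt (fun t : ℝ => ((t : ℂ) * I) ^ (k + 1) / (k + 1)!) (I * (u * I) ^ k / k !) u := by
  have hlin : HasDerivAt (fun t : ℝ => (t : ℂ) * I) I u := by
    simpa using (ofRealCLM.hasDerivAt (x := u)).mul_const I
  refine (((hasDerivAt_pow (k + 1) _).comp u hlin).div_const ((k + 1)! : ℂ)).congr_deriv ?_
  rw [Nat.factorial_succ]
  push_cast
  field_simp

theorem hasDerivAt_expMulITaylorRemainder_succ (m : ℕ) (u : ℝ) :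
    HasDerivAt (expMulITaylorRemainder (m + 1)) (I * expMulITaylorRemainder m u) u := by
  have hexp : HasDerivAt (fun t : ℝ => exp (t * I)) (exp (u * I) * I) u := by
    simpa using ((ofRealCLM.hasDerivAt (x := u)).mul_const I).cexp
  have hsum := HasDerivAt.fun_sum (u := Finset.range m)
    fun k _ => hasDerivAt_ofReal_mul_I_pow_div_factorial k u
  have hR : expMulITaylorRemainder (m + 1) = fun t : ℝ =>
      (exp (t * I) - 1) - ∑ k ∈ Finset.range m, ((t : ℂ) * I) ^ (k + 1) / (k + 1)! := by
    funext t
    simp only [expMulITaylorRemainder, Finset.sum_range_succ', pow_zero, Nat.factorial_zero,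
      Nat.cast_one, div_one]
    ring
  rw [hR]
  refine ((hexp.sub_const 1).sub hsum).congr_deriv ?_
  simp only [expMulITaylorRemainder, mul_sub, Finset.mul_sum, mul_div_assoc]
  ring

theorem norm_expMulITaylorRemainder_le_of_nonneg (m : ℕ) {u : ℝ} (hu : 0 ≤ u) :
    ‖expMulITaylorRemainder m u‖ ≤ u ^ m / m ! := by
  induction m generalizing u with
  | zero => simp [expMulITaylorRemainder, norm_exp_ofReal_mul_I]
  | succ m ih =>
    refine image_norm_le_of_norm_deriv_right_le_deriv_boundary
      (f' := fun t => I * expMulITaylorRemainder m t)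
      (B := fun t => t ^ (m + 1) / (m + 1)!) (B' := fun t => t ^ m / m !)
      (fun t _ => (hasDerivAt_expMulITaylorRemainder_succ m t).continuousAt.continuousWithinAt)
      (fun t _ => (hasDerivAt_expMulITaylorRemainder_succ m t).hasDerivWithinAt)
      (by simp [expMulITaylorRemainder, Finset.sum_range_succ'])
      (fun t => ?_) (fun t ht => ?_) ⟨hu, le_rfl⟩
    · refine ((hasDerivAt_pow (m + 1) t).div_const ((m + 1)! : ℝ)).congr_deriv ?_
      rw [Nat.factorial_succ]
      push_cast
      field_simp
    · simpa using ih ht.1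

@[fun_prop]
theorem continuous_expMulITaylorRemainder (m : ℕ) : Continuous (expMulITaylorRemainder m) := by
  unfold expMulITaylorRemainder
  fun_prop

theorem expMulITaylorRemainder_neg (m : ℕ) (u : ℝ) :
    expMulITaylorRemainder m (-u) = conj (expMulITaylorRemainder m u) := by
  simp [expMulITaylorRemainder, map_sum, ← exp_conj]

theorem norm_expMulITaylorRemainder_le (m : ℕ) (u : ℝ) :
    ‖expMulITaylorRemainder m u‖ ≤ |u| ^ m / m ! := by
  rcases le_total 0 u with hu | hu
  · simpa [abs_of_nonneg hu] using norm_expMulITaylorRemainder_le_of_nonneg m hu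
  · simpa [abs_of_nonpos hu, expMulITaylorRemainder_neg] using
      norm_expMulITaylorRemainder_le_of_nonneg m (neg_nonneg.mpr hu)

end Complex

theorem MeasureTheory.Integrable.continuous_mul_of_support_subset_isCompact
    {X R : Type*} [TopologicalSpace X] [T2Space X] [MeasurableSpace X] [OpensMeasurableSpace X]
    [NormedRing R] [SecondCountableTopologyEither X R] {μ : Measure X} {K : Set X} {f g : X → R}
    (hK : IsCompact K) (hf : Integrable f μ) (hsupp : support f ⊆ K) (hg : Continuous g) :
    Integrable (fun x => g x * f x) μ :=
  (integrableOn_iff_integrable_of_support_subset ((support_mul_subset_right g f).trans hsupp)).mp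
    (IntegrableOn.continuousOn_mul hg.continuousOn hf.integrableOn hK)

theorem norm_integral_mul_le_of_forall_mem_support {X : Type*} [MeasurableSpace X]
    {μ : Measure X} {f g : X → ℂ} (hf : Integrable f μ) {C : ℝ}
    (hg : ∀ x ∈ support f, ‖g x‖ ≤ C) :
    ‖∫ x, g x * f x ∂μ‖ ≤ C * ∫ x, ‖f x‖ ∂μ := by
  rw [← integral_const_mul]
  refine norm_integral_le_of_norm_le (hf.norm.const_mul C) (.of_forall fun x => ?_)
  rw [norm_mul]
  by_cases hx : f x = 0
  · simp [hx]
  · exact mul_le_mul_of_nonneg_right (hg x hx) (norm_nonneg _)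

def HasVanishingMoments {n : ℕ} (μ : Measure (EuclideanSpace ℝ (Fin n)))
    (a : EuclideanSpace ℝ (Fin n) → ℂ) (s : ℕ) : Prop :=
  ∀ α : Fin n → ℕ, ∑ i, α i ≤ s → ∫ ξ, ((∏ i, ξ i ^ α i : ℝ) : ℂ) * a ξ ∂μ = 0

namespace HasVanishingMoments

variable {n s : ℕ} {μ : Measure (EuclideanSpace ℝ (Fin n))} {K : Set (EuclideanSpace ℝ (Fin n))}
  {a : EuclideanSpace ℝ (Fin n) → ℂ}

theorem integral_eval_mul_eq_zero (hmom : HasVanishingMoments μ a s) (hK : IsCompact K)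
    (ha : Integrable a μ) (hsupp : support a ⊆ K)
    {p : MvPolynomial (Fin n) ℂ} (hp : p.totalDegree ≤ s) :
    ∫ ξ, MvPolynomial.eval (fun i => (ξ i : ℂ)) p * a ξ ∂μ = 0 := by
  simp_rw [MvPolynomial.eval_eq', Finset.sum_mul]
  rw [integral_finsetSum _ fun d _ => ha.continuous_mul_of_support_subset_isCompact hK hsupp
    (by fun_prop)]
  refine Finset.sum_eq_zero fun d hd => ?_
  have hdeg : ∑ i, d i ≤ s := by
    simpa [Finsupp.sum_fintype] using (MvPolynomial.le_totalDegree hd).trans hp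
  simp_rw [mul_assoc]
  rw [integral_const_mul, ← mul_zero (MvPolynomial.coeff d p), ← hmom d hdeg]
  push_cast
  rfl

theorem integral_inner_sub_pow_mul_eq_zero (hmom : HasVanishingMoments μ a s) (hK : IsCompact K)
    (ha : Integrable a μ) (hsupp : support a ⊆ K)
    (x₀ y : EuclideanSpace ℝ (Fin n)) {k : ℕ} (hk : k ≤ s) :
    ∫ ξ, ((⟪ξ - x₀, y⟫ : ℝ) : ℂ) ^ k * a ξ ∂μ = 0 := by
  open MvPolynomial in
  let L : MvPolynomial (Fin n) ℂ := ∑ i, C (y i : ℂ) * (X i - C (x₀ i : ℂ))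
  have hL : L.totalDegree ≤ 1 := by
    refine (totalDegree_finsetSum _ _).trans (Finset.sup_le fun i _ => ?_)
    refine (totalDegree_mul _ _).trans ?_
    rw [totalDegree_C, zero_add]
    exact (totalDegree_sub_C_le _ _).trans (totalDegree_X i).le
  have heval : ∀ ξ : EuclideanSpace ℝ (Fin n),
      eval (fun i => (ξ i : ℂ)) (L ^ k) = ((⟪ξ - x₀, y⟫ : ℝ) : ℂ) ^ k := by
    intro ξ
    simp [L, PiLp.inner_apply]
  simp_rw [← heval]
  exact hmom.integral_eval_mul_eq_zero hK ha hsupp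
    (((totalDegree_pow _ _).trans (Nat.mul_le_mul_left k hL)).trans (by rwa [mul_one]))

theorem integral_exp_inner_mul_eq (hmom : HasVanishingMoments μ a s) (hK : IsCompact K)
    (ha : Integrable a μ) (hsupp : support a ⊆ K)
    (x₀ y : EuclideanSpace ℝ (Fin n)) :
    ∫ ξ, exp (⟪ξ, y⟫ * I) * a ξ ∂μ = exp (⟪x₀, y⟫ * I) *
      ∫ ξ, expMulITaylorRemainder (s + 1) ⟪ξ - x₀, y⟫ * a ξ ∂μ := by
  have hint {g : EuclideanSpace ℝ (Fin n) → ℂ} (hg : Continuous g) :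
      Integrable (fun ξ => g ξ * a ξ) μ :=
    ha.continuous_mul_of_support_subset_isCompact hK hsupp hg
  have htaylor : ∫ ξ, (∑ k ∈ Finset.range (s + 1),
      ((⟪ξ - x₀, y⟫ : ℝ) * I) ^ k / k !) * a ξ ∂μ = 0 := by
    have hterms (ξ : EuclideanSpace ℝ (Fin n)) :
        (∑ k ∈ Finset.range (s + 1), ((⟪ξ - x₀, y⟫ : ℝ) * I) ^ k / k !) * a ξ =
          ∑ k ∈ Finset.range (s + 1), I ^ k / k ! * (((⟪ξ - x₀, y⟫ : ℝ) : ℂ) ^ k * a ξ) := by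
      rw [Finset.sum_mul]
      exact Finset.sum_congr rfl fun k _ => by ring
    simp_rw [hterms]
    rw [integral_finsetSum _ fun k _ => (hint (by fun_prop)).const_mul _]
    refine Finset.sum_eq_zero fun k hk => ?_
    rw [integral_const_mul, hmom.integral_inner_sub_pow_mul_eq_zero hK ha hsupp x₀ y
      (Nat.lt_succ_iff.mp (Finset.mem_range.mp hk)), mul_zero]
  have hsplit (ξ : EuclideanSpace ℝ (Fin n)) :
      exp (⟪ξ, y⟫ * I) * a ξ = exp (⟪x₀, y⟫ * I) *
        (expMulITaylorRemainder (s + 1) ⟪ξ - x₀, y⟫ * a ξ + (∑ k ∈ Finset.range (s + 1),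
          ((⟪ξ - x₀, y⟫ : ℝ) * I) ^ k / k !) * a ξ) := by
    have hshift : exp (⟪ξ, y⟫ * I) =
        exp (⟪x₀, y⟫ * I) * exp (⟪ξ - x₀, y⟫ * I) := by
      rw [← exp_add, inner_sub_left]
      push_cast
      ring_nf
    rw [hshift, expMulITaylorRemainder]
    ring
  simp_rw [hsplit]
  rw [integral_const_mul, integral_add (hint (by fun_prop)) (hint (by fun_prop)), htaylor,
    add_zero]

theorem norm_integral_exp_inner_mul_le (hmom : HasVanishingMoments μ a s) (ha : Integrable a μ)
    {x₀ : EuclideanSpace ℝ (Fin n)} {r : ℝ} (hsupp : support a ⊆ Metric.closedBall x₀ r)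
    (y : EuclideanSpace ℝ (Fin n)) :
    ‖∫ ξ, exp (⟪ξ, y⟫ * I) * a ξ ∂μ‖ ≤
      (r * ‖y‖) ^ (s + 1) / (s + 1)! * ∫ ξ, ‖a ξ‖ ∂μ := by
  rw [hmom.integral_exp_inner_mul_eq (isCompact_closedBall x₀ r) ha hsupp x₀ y,
    norm_mul, norm_exp_ofReal_mul_I, one_mul]
  refine norm_integral_mul_le_of_forall_mem_support ha fun ξ hξ => ?_
  refine (norm_expMulITaylorRemainder_le _ _).trans ?_
  have hdist : ‖ξ - x₀‖ ≤ r := mem_closedBall_iff_norm.mp (hsupp hξ)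
  gcongr
  calc |⟪ξ - x₀, y⟫| ≤ ‖ξ - x₀‖ * ‖y‖ := abs_real_inner_le_norm _ _
    _ ≤ r * ‖y‖ := by gcongr

end HasVanishingMoments

theorem fourier_atom_taylor_bound_general {n : ℕ} (s : ℕ)
    (x₀ : EuclideanSpace ℝ (Fin n)) (r : ℝ)
    (a : EuclideanSpace ℝ (Fin n) → ℂ) (ha : Integrable a)
    (hsupp : Function.support a ⊆ Metric.closedBall x₀ r)
    (hmom : ∀ α : Fin n → ℕ, (∑ i, α i) ≤ s →
      ∫ ξ : EuclideanSpace ℝ (Fin n), ((∏ i, (ξ i) ^ (α i) : ℝ) : ℂ) * a ξ = 0) :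
    ∀ x : EuclideanSpace ℝ (Fin n),
      ‖𝓕 a x‖ ≤ min 1 ((2 * π * r * ‖x‖) ^ (s + 1) / (Nat.factorial (s + 1))) *
        ∫ ξ, ‖a ξ‖ := by
  intro x
  have hfourier : 𝓕 a x = ∫ ξ, exp (⟪ξ, (-2 * π) • x⟫ * I) * a ξ := by
    simp [Real.fourier_eq', inner_smul_right]
  have hnorm : ‖(-2 * π) • x‖ = 2 * π * ‖x‖ := by
    rw [norm_smul, Real.norm_eq_abs, abs_of_neg (by linarith [Real.pi_pos])]
    ring
  rw [min_mul_of_nonneg _ _ (integral_nonneg fun _ => norm_nonneg _), one_mul]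
  refine le_min (VectorFourier.norm_fourierIntegral_le_integral_norm _ _ _ a x) ?_
  have hmom' : HasVanishingMoments volume a s := hmom
  calc ‖𝓕 a x‖ ≤ (r * ‖(-2 * π) • x‖) ^ (s + 1) / (s + 1)! * ∫ ξ, ‖a ξ‖ := by
        rw [hfourier]
        exact hmom'.norm_integral_exp_inner_mul_le ha hsupp _
    _ = (2 * π * r * ‖x‖) ^ (s + 1) / (s + 1)! * ∫ ξ, ‖a ξ‖ := by
        rw [hnorm]
        ring

theorem fourier_atom_taylor_bound {n : ℕ} (hn : 1 ≤ n) (s : ℕ)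
    (x₀ : EuclideanSpace ℝ (Fin n)) (r : ℝ) (hr : 0 < r)
    (a : EuclideanSpace ℝ (Fin n) → ℂ) (ha : Integrable a)
    (hsupp : Function.support a ⊆ Metric.closedBall x₀ r)
    (hmom : ∀ α : Fin n → ℕ, (∑ i, α i) ≤ s →
      ∫ ξ : EuclideanSpace ℝ (Fin n), ((∏ i, (ξ i) ^ (α i) : ℝ) : ℂ) * a ξ = 0) :
    ∀ x : EuclideanSpace ℝ (Fin n),
      ‖𝓕 a x‖ ≤ min 1 ((2 * π * r * ‖x‖) ^ (s + 1) / (Nat.factorial (s + 1))) *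
        ∫ ξ, ‖a ξ‖ :=
  fourier_atom_taylor_bound_general s x₀ r a ha hsupp hmom
end

section
/- Let n ≥ 1, let p : ℝⁿ → (0,1] be measurable with 0 < p₋ := essinf p ≤ p₊ := esssup p ≤ 1, let q ∈ (1,∞] and let s ∈ ℕ with s ≥ ⌊n(1/p₋ − 1)⌋. Then there exists a constant C > 0, depending only on n, p₋, p₊, q, s, such that for every Euclidean ball B ⊂ ℝⁿ, every (p(·),q,s)-atom a on B, and every x ∈ ℝⁿ, one has |â(x)| ≤ C max{ |x|^{n(1/p₋ − 1)}, |x|^{n(1/p₊ − 1)} }. -/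
open MeasureTheory Real Filter Topology Function
open scoped ENNReal FourierTransform NNReal

/-- The Luxemburg quasi-norm for a variable exponent `p`, applied to an
`ℝ≥0∞`-valued function `f` (for a complex-valued `g` one takes `f = fun x => ‖g x‖₊`).
The infimum of the empty set is `∞`. -/
noncomputable def luxNorm {α : Type*} [MeasurableSpace α] (μ : Measure α)
    (p : α → ℝ) (f : α → ℝ≥0∞) : ℝ≥0∞ :=
  sInf {c : ℝ≥0∞ | c ≠ 0 ∧ c ≠ ∞ ∧ ∫⁻ x, (f x / c) ^ p x ∂μ ≤ 1}

/-- A `(p(·),q,s)`-atom supported on the closed Euclidean ball `B(c,r)`: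
it belongs to `L^q`, is supported in the ball, satisfies the size condition
`‖a‖_{L^q} ≤ |B|^{1/q} / ‖χ_B‖_{L^{p(·)}}`, and has vanishing moments up to order `s`. -/
def IsVarAtom {n : ℕ} (p : EuclideanSpace ℝ (Fin n) → ℝ) (q : ℝ≥0∞) (s : ℕ)
    (c : EuclideanSpace ℝ (Fin n)) (r : ℝ) (a : EuclideanSpace ℝ (Fin n) → ℂ) : Prop :=
  MeasureTheory.MemLp a q volume ∧
  Function.support a ⊆ Metric.closedBall c r ∧
  MeasureTheory.eLpNorm a q volume ≤
    (volume (Metric.closedBall c r)) ^ (q⁻¹).toReal /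
      luxNorm volume p ((Metric.closedBall c r).indicator fun _ => (1 : ℝ≥0∞)) ∧
  ∀ α : Fin n → ℕ, (∑ i, α i) ≤ s →
    ∫ ξ : EuclideanSpace ℝ (Fin n), ((∏ i, (ξ i) ^ (α i) : ℝ) : ℂ) * a ξ = 0


/-!
Subtracting from `e^{-2πi⟨ξ,x⟩}` its Taylor polynomial of degree `s` in `⟨ξ - c, x⟩` costs
nothing, because the moments of `a` up to order `s` vanish; the Taylor remainder is at most
`(2π r |x|)^{s+1}` on the ball, so `|â(x)| ≤ min(1, (2π r |x|)^{s+1}) ‖a‖₁`. Hölder's inequality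
and the size condition give `‖a‖₁ ≤ |B| / ‖χ_B‖_{L^{p(·)}}`, and testing the Luxemburg norm
separately at `λ ≤ 1` and `λ ≥ 1` gives `‖χ_B‖_{L^{p(·)}} ≥ min(|B|^{1/p₋}, |B|^{1/p₊})`, so
`‖a‖₁ ≲ max(r^{-δ₋}, r^{-δ₊})` with `δ± = n(1/p± - 1)`. Since `0 ≤ δ₊ ≤ δ₋ ≤ s + 1`, the
elementary bound `min(1, (r|x|)^{s+1}) r^{-δ} ≤ |x|^δ` for `0 ≤ δ ≤ s + 1` concludes.
-/

open Finset
open scoped RealInnerProductSpace Nat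

noncomputable def expTaylorRemainder (m : ℕ) (z : ℂ) : ℂ :=
  Complex.exp z - ∑ k ∈ range m, z ^ k / k !

lemma hasDerivAt_pow_succ_div_factorial (k : ℕ) (z : ℂ) :
    HasDerivAt (fun z : ℂ => z ^ (k + 1) / (k + 1)!) (z ^ k / k !) z := by
  have h := (hasDerivAt_pow (k + 1) z).div_const ((k + 1)! : ℂ)
  refine h.congr_deriv ?_
  rw [Nat.factorial_succ, Nat.add_sub_cancel]
  push_cast
  field_simp

lemma hasDerivAt_expTaylorRemainder_succ (m : ℕ) (z : ℂ) :
    HasDerivAt (expTaylorRemainder (m + 1)) (expTaylorRemainder m z) z := by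
  have hsum : HasDerivAt (fun z : ℂ => ∑ k ∈ range (m + 1), z ^ k / k !)
      (∑ k ∈ range m, z ^ k / k !) z := by
    simp only [sum_range_succ' _ m, pow_zero, Nat.factorial_zero, Nat.cast_one, div_one]
    exact (HasDerivAt.fun_sum fun k _ => hasDerivAt_pow_succ_div_factorial k z).add_const 1
  exact (Complex.hasDerivAt_exp z).sub hsum

@[fun_prop]
lemma continuous_expTaylorRemainder (m : ℕ) : Continuous (expTaylorRemainder m) := by
  unfold expTaylorRemainder
  fun_prop

lemma norm_expTaylorRemainder_ofReal_mul_I_le (m : ℕ) (t : ℝ) :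
    ‖expTaylorRemainder m (t * Complex.I)‖ ≤ |t| ^ m := by
  induction m generalizing t with
  | zero => simp [expTaylorRemainder, Complex.norm_exp_ofReal_mul_I]
  | succ m ih =>
    have hderiv : ∀ y ∈ Set.uIcc 0 t, HasDerivWithinAt
        (fun y : ℝ => expTaylorRemainder (m + 1) (y * Complex.I))
        (expTaylorRemainder m (y * Complex.I) * Complex.I) (Set.uIcc 0 t) y := by
      intro y _
      have h := (hasDerivAt_expTaylorRemainder_succ m _).comp y
        ((hasDerivAt_id (y : ℂ)).comp_ofReal.mul_const Complex.I)
      simp only [id, one_mul] at h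
      exact h.hasDerivWithinAt
    have hbound : ∀ y ∈ Set.uIcc 0 t,
        ‖expTaylorRemainder m (y * Complex.I) * Complex.I‖ ≤ |t| ^ m := by
      intro y hy
      rw [norm_mul, Complex.norm_I, mul_one]
      have hyt : |y| ≤ |t| := by simpa using Set.abs_sub_left_of_mem_uIcc hy
      exact (ih y).trans (pow_le_pow_left₀ (abs_nonneg y) hyt m)
    have hzero : expTaylorRemainder (m + 1) 0 = 0 := by
      simp [expTaylorRemainder, sum_range_succ']
    simpa [hzero, pow_succ] using (convex_uIcc 0 t).norm_image_sub_le_of_norm_hasDerivWithin_le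
      hderiv hbound Set.left_mem_uIcc Set.right_mem_uIcc

section CompactSupport

variable {X : Type*} [MeasurableSpace X] {μ : Measure X} {a F : X → ℂ} {K : Set X}

lemma MeasureTheory.Integrable.continuous_mul_of_support_subset [TopologicalSpace X]
    [OpensMeasurableSpace X] [T2Space X] (ha : Integrable a μ) (hK : IsCompact K)
    (hsupp : support a ⊆ K) (hF : Continuous F) :
    Integrable (fun ξ => F ξ * a ξ) μ := by
  rw [← integrableOn_iff_integrable_of_support_subset
    ((support_mul_subset_right _ _).trans hsupp)]
  exact ha.integrableOn.continuousOn_mul hF.continuousOn hK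

lemma norm_integral_mul_le_of_support_subset (ha : Integrable a μ) (hsupp : support a ⊆ K)
    {M : ℝ} (hF : ∀ ξ ∈ K, ‖F ξ‖ ≤ M) :
    ‖∫ ξ, F ξ * a ξ ∂μ‖ ≤ M * ∫ ξ, ‖a ξ‖ ∂μ := by
  rw [← integral_const_mul]
  refine norm_integral_le_of_norm_le (ha.norm.const_mul M) (.of_forall fun ξ => ?_)
  by_cases hξ : ξ ∈ K
  · rw [norm_mul]
    exact mul_le_mul_of_nonneg_right (hF ξ hξ) (norm_nonneg _)
  · simp [notMem_support.1 fun h => hξ (hsupp h)]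

end CompactSupport

lemma integral_inner_pow_mul_eq_zero_of_moments {ι : Type*} [Fintype ι]
    {a : EuclideanSpace ℝ ι → ℂ} {K : Set (EuclideanSpace ℝ ι)} {s : ℕ}
    (ha : Integrable a) (hK : IsCompact K) (hsupp : support a ⊆ K)
    (hmom : ∀ α : ι → ℕ, ∑ i, α i ≤ s → ∫ ξ, ((∏ i, ξ i ^ α i : ℝ) : ℂ) * a ξ = 0)
    (x : EuclideanSpace ℝ ι) {j : ℕ} (hj : j ≤ s) :
    ∫ ξ, ((⟪ξ, x⟫ : ℝ) : ℂ) ^ j * a ξ = 0 := by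
  classical
  have hexpand : ∀ ξ : EuclideanSpace ℝ ι, ((⟪ξ, x⟫ : ℝ) : ℂ) ^ j * a ξ =
      ∑ α ∈ piAntidiag univ j, ((Nat.multinomial univ α : ℂ) * ∏ i, (x i : ℂ) ^ α i) *
        (((∏ i, ξ i ^ α i : ℝ) : ℂ) * a ξ) := by
    intro ξ
    simp only [PiLp.inner_apply, RCLike.inner_apply, conj_trivial, Complex.ofReal_sum,
      Complex.ofReal_mul]
    rw [sum_pow_eq_sum_piAntidiag, sum_mul]
    refine sum_congr rfl fun α _ => ?_
    simp only [Complex.ofReal_prod, Complex.ofReal_pow, mul_pow, prod_mul_distrib]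
    ring
  simp_rw [hexpand]
  rw [integral_finsetSum _ fun α _ => (ha.continuous_mul_of_support_subset hK hsupp
    (by fun_prop)).const_mul _]
  refine sum_eq_zero fun α hα => ?_
  rw [integral_const_mul, hmom α ((mem_piAntidiag.1 hα).1.le.trans hj), mul_zero]

section Fourier

variable {V : Type*} [NormedAddCommGroup V] [InnerProductSpace ℝ V] [MeasurableSpace V]
  [BorelSpace V] [FiniteDimensional ℝ V] {a : V → ℂ} {K : Set V} {c x : V} {r : ℝ} {s : ℕ}

lemma integral_inner_sub_pow_mul_eq_zero (ha : Integrable a) (hK : IsCompact K)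
    (hsupp : support a ⊆ K) (hmom : ∀ j ≤ s, ∫ ξ, ((⟪ξ, x⟫ : ℝ) : ℂ) ^ j * a ξ = 0)
    {k : ℕ} (hk : k ≤ s) :
    ∫ ξ, ((⟪ξ - c, x⟫ : ℝ) : ℂ) ^ k * a ξ = 0 := by
  have hexpand : ∀ ξ, ((⟪ξ - c, x⟫ : ℝ) : ℂ) ^ k * a ξ = ∑ j ∈ range (k + 1),
      ((-⟪c, x⟫ : ℝ) : ℂ) ^ (k - j) * k.choose j * (((⟪ξ, x⟫ : ℝ) : ℂ) ^ j * a ξ) := by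
    intro ξ
    rw [inner_sub_left, sub_eq_add_neg, Complex.ofReal_add, add_pow, sum_mul]
    exact sum_congr rfl fun j _ => by ring
  simp_rw [hexpand]
  rw [integral_finsetSum _ fun j _ =>
    (ha.continuous_mul_of_support_subset hK hsupp (by fun_prop)).const_mul _]
  refine sum_eq_zero fun j hj => ?_
  rw [integral_const_mul, hmom j ((Nat.lt_succ_iff.1 (mem_range.1 hj)).trans hk), mul_zero]

lemma fourier_eq_mul_integral_expTaylorRemainder (ha : Integrable a) (hK : IsCompact K)
    (hsupp : support a ⊆ K) (hmom : ∀ j ≤ s, ∫ ξ, ((⟪ξ, x⟫ : ℝ) : ℂ) ^ j * a ξ = 0) :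
    𝓕 a x = Complex.exp ((-2 * π * ⟪c, x⟫ : ℝ) * Complex.I) *
      ∫ ξ, expTaylorRemainder (s + 1) ((-2 * π * ⟪ξ - c, x⟫ : ℝ) * Complex.I) * a ξ := by
  set e₀ := Complex.exp ((-2 * π * ⟪c, x⟫ : ℝ) * Complex.I)
  have hsplit : ∀ ξ, Complex.exp ((-2 * π * ⟪ξ, x⟫ : ℝ) * Complex.I) • a ξ =
      e₀ * (expTaylorRemainder (s + 1) ((-2 * π * ⟪ξ - c, x⟫ : ℝ) * Complex.I) * a ξ) +
      ∑ k ∈ range (s + 1), e₀ * ((-2 * π * Complex.I) ^ k / k !) *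
        (((⟪ξ - c, x⟫ : ℝ) : ℂ) ^ k * a ξ) := by
    intro ξ
    have hshift : Complex.exp ((-2 * π * ⟪ξ, x⟫ : ℝ) * Complex.I) =
        e₀ * Complex.exp ((-2 * π * ⟪ξ - c, x⟫ : ℝ) * Complex.I) := by
      rw [← Complex.exp_add, inner_sub_left]
      push_cast
      ring_nf
    have hpoly : ∑ k ∈ range (s + 1), e₀ * ((-2 * π * Complex.I) ^ k / k !) *
        (((⟪ξ - c, x⟫ : ℝ) : ℂ) ^ k * a ξ) = e₀ * ((∑ k ∈ range (s + 1),
          (((-2 * π * ⟪ξ - c, x⟫ : ℝ) : ℂ) * Complex.I) ^ k / k !) * a ξ) := by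
      rw [sum_mul, mul_sum]
      refine sum_congr rfl fun k _ => ?_
      push_cast
      ring
    rw [hshift, hpoly, smul_eq_mul, expTaylorRemainder]
    ring
  have hint : ∀ k, Integrable fun ξ => ((⟪ξ - c, x⟫ : ℝ) : ℂ) ^ k * a ξ := fun k =>
    ha.continuous_mul_of_support_subset hK hsupp (by fun_prop)
  rw [Real.fourier_eq', integral_congr_ae (.of_forall hsplit), integral_add, integral_const_mul,
    integral_finsetSum, sum_eq_zero, add_zero]
  · intro k hk
    rw [integral_const_mul, integral_inner_sub_pow_mul_eq_zero ha hK hsupp hmom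
      (Nat.lt_succ_iff.1 (mem_range.1 hk)), mul_zero]
  · exact fun k _ => (hint k).const_mul _
  · exact (ha.continuous_mul_of_support_subset hK hsupp (by fun_prop)).const_mul _
  · exact integrable_finsetSum _ fun k _ => (hint k).const_mul _

lemma norm_fourier_le_pow_mul_integral_norm (ha : Integrable a)
    (hsupp : support a ⊆ Metric.closedBall c r)
    (hmom : ∀ j ≤ s, ∫ ξ, ((⟪ξ, x⟫ : ℝ) : ℂ) ^ j * a ξ = 0) :
    ‖𝓕 a x‖ ≤ (2 * π * r * ‖x‖) ^ (s + 1) * ∫ ξ, ‖a ξ‖ := by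
  rw [fourier_eq_mul_integral_expTaylorRemainder ha (isCompact_closedBall c r) hsupp hmom,
    norm_mul, Complex.norm_exp_ofReal_mul_I, one_mul]
  refine norm_integral_mul_le_of_support_subset ha hsupp fun ξ hξ => ?_
  refine (norm_expTaylorRemainder_ofReal_mul_I_le _ _).trans
    (pow_le_pow_left₀ (abs_nonneg _) ?_ _)
  have hinner : |⟪ξ - c, x⟫| ≤ r * ‖x‖ := (abs_real_inner_le_norm _ _).trans
    (mul_le_mul_of_nonneg_right (mem_closedBall_iff_norm.1 hξ) (norm_nonneg x))
  rw [abs_mul, abs_mul, abs_neg, abs_two, abs_of_pos pi_pos, mul_assoc _ r]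
  gcongr

lemma norm_fourier_le_of_moments (ha : Integrable a)
    (hsupp : support a ⊆ Metric.closedBall c r)
    (hmom : ∀ j ≤ s, ∫ ξ, ((⟪ξ, x⟫ : ℝ) : ℂ) ^ j * a ξ = 0) :
    ‖𝓕 a x‖ ≤ (2 * π) ^ (s + 1) * min 1 ((r * ‖x‖) ^ (s + 1)) * ∫ ξ, ‖a ξ‖ := by
  have htrivial : ‖𝓕 a x‖ ≤ ∫ ξ, ‖a ξ‖ :=
    VectorFourier.norm_fourierIntegral_le_integral_norm _ _ _ _ _
  have hpi : (1 : ℝ) ≤ (2 * π) ^ (s + 1) := one_le_pow₀ (by linarith [pi_gt_three])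
  have hI : 0 ≤ ∫ ξ, ‖a ξ‖ := integral_nonneg fun ξ => norm_nonneg _
  rw [mul_min_of_nonneg _ _ (by positivity), min_mul_of_nonneg _ _ hI, mul_one, ← mul_pow,
    ← mul_assoc]
  exact le_min (htrivial.trans (le_mul_of_one_le_left hI hpi))
    (norm_fourier_le_pow_mul_integral_norm ha hsupp hmom)

end Fourier

section Luxemburg

variable {α : Type*} [MeasurableSpace α] {μ : Measure α} {p : α → ℝ} {A : Set α}

lemma essInf_le_essSup_of_isBoundedUnder [NeZero μ] (hle : IsBoundedUnder (· ≤ ·) (ae μ) p)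
    (hge : IsBoundedUnder (· ≥ ·) (ae μ) p) : essInf p μ ≤ essSup p μ :=
  liminf_le_limsup hle hge

lemma rpow_inv_measure_le_of_setLIntegral_rpow_le {b : ℝ≥0∞} {e : ℝ} (he : 0 < e)
    (hbe : ∀ᵐ x ∂μ, b ^ e ≤ b ^ p x) (hint : ∫⁻ x in A, b ^ p x ∂μ ≤ 1) :
    μ A ^ e⁻¹ ≤ b⁻¹ := by
  have hle : b ^ e * μ A ≤ 1 := calc
    b ^ e * μ A = ∫⁻ _ in A, b ^ e ∂μ := (setLIntegral_const A _).symm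
    _ ≤ ∫⁻ x in A, b ^ p x ∂μ := lintegral_mono_ae (ae_restrict_of_ae hbe)
    _ ≤ 1 := hint
  rw [ENNReal.rpow_inv_le_iff he, ENNReal.inv_rpow, ENNReal.le_inv_iff_mul_le, mul_comm]
  exact hle

lemma min_rpow_inv_le_luxNorm_indicator [NeZero μ] (hpos : ∀ x, 0 < p x)
    (hbdd : IsBoundedUnder (· ≤ ·) (ae μ) p) (h0 : 0 < essInf p μ) (hA : MeasurableSet A) :
    min (μ A ^ (essInf p μ)⁻¹) (μ A ^ (essSup p μ)⁻¹) ≤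
      luxNorm μ p (A.indicator fun _ => 1) := by
  have hbdd' : IsBoundedUnder (· ≥ ·) (ae μ) p := isBoundedUnder_of ⟨0, fun x => (hpos x).le⟩
  have hsup : 0 < essSup p μ := h0.trans_le (essInf_le_essSup_of_isBoundedUnder hbdd hbdd')
  refine le_sInf fun C ⟨_, _, hC⟩ => ?_
  have hindicator : (fun x => (A.indicator (fun _ => (1 : ℝ≥0∞)) x / C) ^ p x) =
      A.indicator fun x => C⁻¹ ^ p x := by
    ext x
    by_cases hx : x ∈ A
    · simp [hx]
    · simp [hx, ENNReal.zero_rpow_of_pos (hpos x)]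
  rw [hindicator, lintegral_indicator hA] at hC
  rcases le_total C 1 with hC1 | hC1
  · refine (min_le_left _ _).trans ?_
    simpa using rpow_inv_measure_le_of_setLIntegral_rpow_le h0 ((ae_essInf_le hbdd').mono
      fun x hx => ENNReal.rpow_le_rpow_of_exponent_le (ENNReal.one_le_inv.2 hC1) hx) hC
  · refine (min_le_right _ _).trans ?_
    simpa using rpow_inv_measure_le_of_setLIntegral_rpow_le hsup ((ae_le_essSup hbdd).mono
      fun x hx => ENNReal.rpow_le_rpow_of_exponent_ge (ENNReal.inv_le_one.2 hC1) hx) hC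

lemma eLpNorm_le_eLpNorm_mul_rpow_measure_of_support_subset {E : Type*} [NormedAddCommGroup E]
    {f : α → E} {p q : ℝ≥0∞} (hpq : p ≤ q) (hf : AEStronglyMeasurable f μ)
    (hsupp : support f ⊆ A) :
    eLpNorm f p μ ≤ eLpNorm f q μ * μ A ^ (1 / p.toReal - 1 / q.toReal) := by
  rw [← eLpNorm_restrict_eq_of_support_subset hsupp,
    ← eLpNorm_restrict_eq_of_support_subset (p := q) hsupp, ← Measure.restrict_apply_univ]
  exact eLpNorm_le_eLpNorm_mul_rpow_measure_univ hpq hf.restrict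

lemma eLpNorm_one_le_max_rpow_of_le_div_luxNorm [NeZero μ] (hpos : ∀ x, 0 < p x)
    (hbdd : IsBoundedUnder (· ≤ ·) (ae μ) p) (h0 : 0 < essInf p μ) (hA : MeasurableSet A)
    (hA0 : μ A ≠ 0) (hAtop : μ A ≠ ∞) {q : ℝ≥0∞} (hq : 1 ≤ q) {a : α → ℂ}
    (ha : AEStronglyMeasurable a μ) (hsupp : support a ⊆ A)
    (hsize : eLpNorm a q μ ≤ μ A ^ (q⁻¹).toReal / luxNorm μ p (A.indicator fun _ => 1)) :
    eLpNorm a 1 μ ≤ max (μ A ^ (1 - (essInf p μ)⁻¹)) (μ A ^ (1 - (essSup p μ)⁻¹)) := by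
  have hdiv : ∀ e : ℝ, μ A / μ A ^ e = μ A ^ (1 - e) := fun e => by
    rw [ENNReal.rpow_sub _ _ hA0 hAtop, ENNReal.rpow_one]
  calc eLpNorm a 1 μ ≤ eLpNorm a q μ * μ A ^ (1 - (q⁻¹).toReal) := by
        simpa using eLpNorm_le_eLpNorm_mul_rpow_measure_of_support_subset hq ha hsupp
    _ ≤ μ A ^ (q⁻¹).toReal / min (μ A ^ (essInf p μ)⁻¹) (μ A ^ (essSup p μ)⁻¹) *
        μ A ^ (1 - (q⁻¹).toReal) := by
      gcongr
      exact hsize.trans (ENNReal.div_le_div_left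
        (min_rpow_inv_le_luxNorm_indicator hpos hbdd h0 hA) _)
    _ = μ A / min (μ A ^ (essInf p μ)⁻¹) (μ A ^ (essSup p μ)⁻¹) := by
      rw [div_eq_mul_inv, div_eq_mul_inv, mul_right_comm, ← ENNReal.rpow_add _ _ hA0 hAtop,
        add_sub_cancel, ENNReal.rpow_one]
    _ = max (μ A ^ (1 - (essInf p μ)⁻¹)) (μ A ^ (1 - (essSup p μ)⁻¹)) := by
      rw [Antitone.map_min fun _ _ h => ENNReal.div_le_div_left h (μ A), hdiv, hdiv]

end Luxemburg

lemma min_one_pow_mul_rpow_neg_le {r y e : ℝ} {m : ℕ} (hr : 0 < r) (hy : 0 ≤ y) (he : 0 ≤ e)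
    (hem : e ≤ m) : min 1 ((r * y) ^ m) * r ^ (-e) ≤ y ^ e := by
  have hmin : min 1 ((r * y) ^ m) ≤ (r * y) ^ e := by
    rcases le_total (r * y) 1 with hry | hry
    · rw [← Real.rpow_natCast]
      exact (min_le_right _ _).trans
        (Real.rpow_le_rpow_of_exponent_ge' (by positivity) hry he hem)
    · exact (min_le_left _ _).trans (Real.one_le_rpow hry he)
  calc min 1 ((r * y) ^ m) * r ^ (-e) ≤ (r * y) ^ e * r ^ (-e) := by gcongr
    _ = y ^ e := by
      rw [Real.mul_rpow hr.le hy, Real.rpow_neg hr.le]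
      field_simp

lemma min_one_pow_mul_max_rpow_neg_le {r y e e' : ℝ} {m : ℕ} (hr : 0 < r) (hy : 0 ≤ y)
    (he : 0 ≤ e) (hem : e ≤ m) (he' : 0 ≤ e') (he'm : e' ≤ m) :
    min 1 ((r * y) ^ m) * max (r ^ (-e)) (r ^ (-e')) ≤ max (y ^ e) (y ^ e') := by
  rw [mul_max_of_nonneg _ _ (by positivity)]
  exact max_le_max (min_one_pow_mul_rpow_neg_le hr hy he hem)
    (min_one_pow_mul_rpow_neg_le hr hy he' he'm)

namespace IsVarAtom

variable {n : ℕ} {p : EuclideanSpace ℝ (Fin n) → ℝ} {q : ℝ≥0∞} {s : ℕ}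
  {c : EuclideanSpace ℝ (Fin n)} {r : ℝ} {a : EuclideanSpace ℝ (Fin n) → ℂ}

lemma integrable (h : IsVarAtom p q s c r a) (hq : 1 ≤ q) : Integrable a :=
  memLp_one_iff_integrable.1 (h.1.mono_exponent_of_measure_support_ne_top
    (fun _ hx => notMem_support.1 fun hx' => hx (h.2.1 hx')) measure_closedBall_lt_top.ne hq)

lemma norm_fourier_le (h : IsVarAtom p q s c r a) (hq : 1 ≤ q) (x : EuclideanSpace ℝ (Fin n)) :
    ‖𝓕 a x‖ ≤ (2 * π) ^ (s + 1) * min 1 ((r * ‖x‖) ^ (s + 1)) * ∫ ξ, ‖a ξ‖ :=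
  norm_fourier_le_of_moments (h.integrable hq) h.2.1 fun _ hj =>
    integral_inner_pow_mul_eq_zero_of_moments (h.integrable hq) (isCompact_closedBall c r) h.2.1
      h.2.2.2 x hj

end IsVarAtom

lemma exists_integral_norm_le_of_isVarAtom {n : ℕ} {p : EuclideanSpace ℝ (Fin n) → ℝ}
    (hpos : ∀ x, 0 < p x) (hbdd : IsBoundedUnder (· ≤ ·) (ae volume) p)
    (h0 : 0 < essInf p volume) {q : ℝ≥0∞} (hq : 1 ≤ q) (s : ℕ) :
    ∃ K > 0, ∀ (c : EuclideanSpace ℝ (Fin n)) (r : ℝ), 0 < r →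
      ∀ a : EuclideanSpace ℝ (Fin n) → ℂ, IsVarAtom p q s c r a →
        ∫ ξ, ‖a ξ‖ ≤ K * max (r ^ (-((n : ℝ) * ((essInf p volume)⁻¹ - 1))))
          (r ^ (-((n : ℝ) * ((essSup p volume)⁻¹ - 1)))) := by
  set κ := (volume (Metric.closedBall (0 : EuclideanSpace ℝ (Fin n)) 1)).toReal
  have hκ : 0 < κ := ENNReal.toReal_pos (Metric.measure_closedBall_pos _ _ one_pos).ne'
    measure_closedBall_lt_top.ne
  refine ⟨max (κ ^ (1 - (essInf p volume)⁻¹)) (κ ^ (1 - (essSup p volume)⁻¹)),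
    lt_max_of_lt_left (Real.rpow_pos_of_pos hκ _), fun c r hr a h => ?_⟩
  have hball : ∀ e : ℝ, (volume (Metric.closedBall c r) ^ (1 - e)).toReal =
      κ ^ (1 - e) * r ^ (-((n : ℝ) * (e - 1))) := fun e => by
    rw [← ENNReal.toReal_rpow, Measure.addHaar_closedBall' _ _ hr.le, ENNReal.toReal_mul,
      ENNReal.toReal_ofReal (by positivity), finrank_euclideanSpace_fin, mul_comm,
      Real.mul_rpow hκ.le (by positivity), ← Real.rpow_natCast, ← Real.rpow_mul hr.le]
    ring_nf
  have hfin : ∀ e : ℝ, volume (Metric.closedBall c r) ^ e ≠ ∞ := fun e =>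
    ENNReal.rpow_ne_top_of_ne_zero (Metric.measure_closedBall_pos _ _ hr).ne'
      measure_closedBall_lt_top.ne
  have hL1 := eLpNorm_one_le_max_rpow_of_le_div_luxNorm hpos hbdd h0 measurableSet_closedBall
    (Metric.measure_closedBall_pos _ _ hr).ne' measure_closedBall_lt_top.ne hq h.1.1 h.2.1 h.2.2.1
  calc ∫ ξ, ‖a ξ‖ = (eLpNorm a 1 volume).toReal := by
        rw [eLpNorm_one_eq_lintegral_enorm, ← ofReal_integral_norm_eq_lintegral_enorm
          (h.integrable hq), ENNReal.toReal_ofReal (integral_nonneg fun _ => norm_nonneg _)]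
    _ ≤ max (κ ^ (1 - (essInf p volume)⁻¹) * r ^ (-((n : ℝ) * ((essInf p volume)⁻¹ - 1))))
          (κ ^ (1 - (essSup p volume)⁻¹) * r ^ (-((n : ℝ) * ((essSup p volume)⁻¹ - 1)))) := by
        rw [← hball, ← hball, ← ENNReal.toReal_max (hfin _) (hfin _)]
        exact ENNReal.toReal_mono (max_ne_top (hfin _) (hfin _)) hL1
    _ ≤ _ := max_le (by gcongr <;> first | positivity | exact le_max_left _ _)
        (by gcongr <;> first | positivity | exact le_max_right _ _)

theorem atom_fourier_pointwise_bound_general {n : ℕ}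
    (p : EuclideanSpace ℝ (Fin n) → ℝ)
    (hpos : ∀ x, 0 < p x) (hp1 : ∀ x, p x ≤ 1)
    (h0 : 0 < essInf p volume)
    (q : ℝ≥0∞) (hq : 1 < q) (s : ℕ)
    (hs : (⌊(n : ℝ) * (1 / essInf p volume - 1)⌋ : ℤ) ≤ (s : ℤ)) :
    ∃ C > 0, ∀ (c : EuclideanSpace ℝ (Fin n)) (r : ℝ), 0 < r →
      ∀ a : EuclideanSpace ℝ (Fin n) → ℂ, IsVarAtom p q s c r a →
      ∀ x : EuclideanSpace ℝ (Fin n),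
        ‖𝓕 a x‖ ≤ C * max (‖x‖ ^ ((n : ℝ) * (1 / essInf p volume - 1)))
          (‖x‖ ^ ((n : ℝ) * (1 / essSup p volume - 1))) := by
  have hbdd : IsBoundedUnder (· ≤ ·) (ae volume) p := isBoundedUnder_of ⟨1, hp1⟩
  have hbdd' : IsBoundedUnder (· ≥ ·) (ae volume) p := isBoundedUnder_of ⟨0, fun x => (hpos x).le⟩
  have hinf_le_sup := essInf_le_essSup_of_isBoundedUnder hbdd hbdd'
  have hsup_le_one : essSup p volume ≤ 1 :=
    essSup_le_of_ae_le 1 (.of_forall hp1) hbdd'.isCoboundedUnder_le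
  simp only [one_div] at hs ⊢
  set δ := (n : ℝ) * ((essInf p volume)⁻¹ - 1)
  set δ' := (n : ℝ) * ((essSup p volume)⁻¹ - 1)
  have hδs : δ ≤ (s + 1 : ℕ) := by exact_mod_cast (Int.floor_le_iff.1 hs).le
  have hδ' : 0 ≤ δ' := mul_nonneg n.cast_nonneg
    (sub_nonneg.2 ((one_le_inv₀ (h0.trans_le hinf_le_sup)).2 hsup_le_one))
  have hδ'δ : δ' ≤ δ :=
    mul_le_mul_of_nonneg_left (sub_le_sub_right (inv_anti₀ h0 hinf_le_sup) 1) n.cast_nonneg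
  obtain ⟨K, hK, hL1⟩ := exists_integral_norm_le_of_isVarAtom hpos hbdd h0 hq.le s
  refine ⟨(2 * π) ^ (s + 1) * K, by positivity, fun c r hr a ha x => ?_⟩
  calc ‖𝓕 a x‖ ≤ (2 * π) ^ (s + 1) * min 1 ((r * ‖x‖) ^ (s + 1)) * ∫ ξ, ‖a ξ‖ :=
        ha.norm_fourier_le hq.le x
    _ ≤ (2 * π) ^ (s + 1) * min 1 ((r * ‖x‖) ^ (s + 1)) * (K * max (r ^ (-δ)) (r ^ (-δ'))) := by
        gcongr
        exact hL1 c r hr a ha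
    _ = (2 * π) ^ (s + 1) * K * (min 1 ((r * ‖x‖) ^ (s + 1)) * max (r ^ (-δ)) (r ^ (-δ'))) := by
        ring
    _ ≤ (2 * π) ^ (s + 1) * K * max (‖x‖ ^ δ) (‖x‖ ^ δ') := by
        gcongr
        exact min_one_pow_mul_max_rpow_neg_le hr (norm_nonneg x) (hδ'.trans hδ'δ) hδs hδ'
          (hδ'δ.trans hδs)

theorem atom_fourier_pointwise_bound {n : ℕ} (hn : 1 ≤ n)
    (p : EuclideanSpace ℝ (Fin n) → ℝ) (hp : Measurable p)
    (hpos : ∀ x, 0 < p x) (hp1 : ∀ x, p x ≤ 1)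
    (h0 : 0 < essInf p volume)
    (q : ℝ≥0∞) (hq : 1 < q) (s : ℕ)
    (hs : (⌊(n : ℝ) * (1 / essInf p volume - 1)⌋ : ℤ) ≤ (s : ℤ)) :
    ∃ C > 0, ∀ (c : EuclideanSpace ℝ (Fin n)) (r : ℝ), 0 < r →
      ∀ a : EuclideanSpace ℝ (Fin n) → ℂ, IsVarAtom p q s c r a →
      ∀ x : EuclideanSpace ℝ (Fin n),
        ‖𝓕 a x‖ ≤ C * max (‖x‖ ^ ((n : ℝ) * (1 / essInf p volume - 1)))
          (‖x‖ ^ ((n : ℝ) * (1 / essSup p volume - 1))) :=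
  atom_fourier_pointwise_bound_general p hpos hp1 h0 q hq s hs
end

section
/- Let n ≥ 1, let p : ℝⁿ → (0,1] be measurable with 0 < p₋ := essinf p ≤ p₊ := esssup p ≤ 1, let q ∈ (1,∞] and let s ∈ ℕ with s ≥ ⌊n(1/p₋ − 1)⌋. Then for every Euclidean ball B ⊂ ℝⁿ and every (p(·),q,s)-atom a on B, one has lim_{x → 0, x ≠ 0} |â(x)| / |x|^{n(1/p₋ − 1)} = 0. -/
open MeasureTheory Real Filter Topology Function
open scoped ENNReal FourierTransform NNReal

lemma integrable_cont_mul {n : ℕ} {a : EuclideanSpace ℝ (Fin n) → ℂ}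
    (haL1 : Integrable a volume) {c : EuclideanSpace ℝ (Fin n)} {r : ℝ}
    (hsupp : Function.support a ⊆ Metric.closedBall c r)
    {g : EuclideanSpace ℝ (Fin n) → ℂ} (hg : Continuous g) :
    Integrable (fun ξ => g ξ * a ξ) volume := by
  obtain ⟨C, hC⟩ := (isCompact_closedBall c r).exists_bound_of_continuousOn hg.continuousOn
  have key : Integrable (fun ξ => (Metric.closedBall c r).indicator g ξ * a ξ) volume := by
    apply haL1.bdd_mul (c := max C 0) (hg.aestronglyMeasurable.indicator Metric.isClosed_closedBall.measurableSet)
    refine Filter.Eventually.of_forall fun ξ => ?_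
    by_cases h : ξ ∈ Metric.closedBall c r
    · rw [Set.indicator_of_mem h]; exact (hC ξ h).trans (le_max_left _ _)
    · rw [Set.indicator_of_notMem h]; simp
  refine key.congr (Filter.Eventually.of_forall fun ξ => ?_)
  by_cases h : ξ ∈ Metric.closedBall c r
  · simp only [Set.indicator_of_mem h]
  · have ha0 : a ξ = 0 := by
      by_contra h'; exact h (hsupp h')
    simp only [Set.indicator_of_notMem h, ha0, mul_zero]

lemma moment_inner {n s : ℕ} {a : EuclideanSpace ℝ (Fin n) → ℂ}
    (haL1 : Integrable a volume) {c : EuclideanSpace ℝ (Fin n)} {r : ℝ}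
    (hsupp : Function.support a ⊆ Metric.closedBall c r)
    (hmom : ∀ α : Fin n → ℕ, (∑ i, α i) ≤ s →
      ∫ ξ : EuclideanSpace ℝ (Fin n), ((∏ i, (ξ i) ^ (α i) : ℝ) : ℂ) * a ξ = 0)
    (x : EuclideanSpace ℝ (Fin n)) {k : ℕ} (hk : k ≤ s) :
    ∫ ξ : EuclideanSpace ℝ (Fin n), (((inner ℝ ξ x : ℝ) : ℂ)) ^ k * a ξ = 0 := by
  classical
  set α : (Fin k → Fin n) → (Fin n → ℕ) :=
    fun f i => (Finset.univ.filter (fun j => f j = i)).card with hα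
  have hαsum : ∀ f : Fin k → Fin n, (∑ i, α f i) = k := by
    intro f
    exact (Finset.card_eq_sum_card_fiberwise
      (fun j (_ : j ∈ Finset.univ) => Finset.mem_univ (f j))).symm.trans (Finset.card_fin k)
  have expand : (fun ξ : EuclideanSpace ℝ (Fin n) => (((inner ℝ ξ x : ℝ) : ℂ)) ^ k * a ξ)
      = fun ξ => ∑ f : Fin k → Fin n,
        (∏ j, ((x (f j) : ℂ))) * (((∏ i, (ξ i) ^ (α f i) : ℝ) : ℂ) * a ξ) := by
    funext ξ
    have h1 : (((inner ℝ ξ x : ℝ) : ℂ)) = ∑ i, ((ξ i : ℂ)) * ((x i : ℂ)) := by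
      simp [PiLp.inner_apply, RCLike.inner_apply, mul_comm]
    rw [h1, Fintype.sum_pow, Finset.sum_mul]
    refine Finset.sum_congr rfl fun f _ => ?_
    have h2' : (∏ j : Fin k, ξ (f j)) = ∏ i : Fin n, ξ i ^ (α f i) := by
      rw [hα, Finset.prod_comp]
      refine Finset.prod_subset (Finset.subset_univ _) (fun i _ hi => ?_)
      have he : (Finset.univ.filter (fun j => f j = i)) = ∅ :=
        Finset.filter_eq_empty_iff.mpr
          (fun {j} _ h => hi (Finset.mem_image.mpr ⟨j, Finset.mem_univ j, h⟩))
      rw [he, Finset.card_empty, pow_zero]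
    have h2 : (∏ j : Fin k, ((ξ (f j) : ℂ))) = ((∏ i, (ξ i) ^ (α f i) : ℝ) : ℂ) := by
      rw [← h2']; push_cast; ring
    rw [Finset.prod_mul_distrib, h2]
    ring
  rw [expand, integral_finset_sum]
  · refine Finset.sum_eq_zero fun f _ => ?_
    rw [integral_const_mul, hmom (α f) (by rw [hαsum f]; exact hk), mul_zero]
  · intro f _
    have hcont : Continuous fun ξ : EuclideanSpace ℝ (Fin n) =>
        (∏ j, ((x (f j) : ℂ))) * ((∏ i, (ξ i) ^ (α f i) : ℝ) : ℂ) := by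
      refine continuous_const.mul (Complex.continuous_ofReal.comp ?_)
      exact continuous_finset_prod _ fun i _ =>
        ((EuclideanSpace.proj i).continuous.pow _)
    have := integrable_cont_mul haL1 hsupp hcont
    refine this.congr (Filter.Eventually.of_forall fun ξ => ?_)
    simp only [mul_assoc]

theorem atom_fourier_vanishing_at_origin {n : ℕ} (hn : 1 ≤ n)
    (p : EuclideanSpace ℝ (Fin n) → ℝ) (hp : Measurable p)
    (hpos : ∀ x, 0 < p x) (hp1 : ∀ x, p x ≤ 1)
    (h0 : 0 < essInf p volume)
    (q : ℝ≥0∞) (hq : 1 < q) (s : ℕ)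
    (hs : (⌊(n : ℝ) * (1 / essInf p volume - 1)⌋ : ℤ) ≤ (s : ℤ))
    (c : EuclideanSpace ℝ (Fin n)) (r : ℝ) (hr : 0 < r)
    (a : EuclideanSpace ℝ (Fin n) → ℂ) (ha : IsVarAtom p q s c r a) :
    Tendsto (fun x : EuclideanSpace ℝ (Fin n) =>
        ‖𝓕 a x‖ / ‖x‖ ^ ((n : ℝ) * (1 / essInf p volume - 1)))
      (𝓝[≠] 0) (𝓝 0) := by
  obtain ⟨haLq, hsupp, -, hmom⟩ := ha
  classical
  set ν := (n : ℝ) * (1 / essInf p volume - 1) with hνdef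
  have ha0 : ∀ ξ, ξ ∉ Metric.closedBall c r → a ξ = 0 := by
    intro ξ h; by_contra h'; exact h (hsupp h')
  have haL1 : Integrable a volume := by
    rw [← memLp_one_iff_integrable]
    exact haLq.mono_exponent_of_measure_support_ne_top ha0
      ((isCompact_closedBall c r).measure_lt_top).ne hq.le
  set R := ‖c‖ + r with hRdef
  have hRpos : 0 < R := lt_of_lt_of_le hr (le_add_of_nonneg_left (norm_nonneg c))
  have h2πR : 0 < 2 * π * R := by positivity
  set I := ∫ ξ, ‖a ξ‖ with hIdef
  have hInn : 0 ≤ I := integral_nonneg fun ξ => norm_nonneg _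
  set cst : ℝ := ((s + 1 : ℕ).succ : ℝ) * (((s + 1 : ℕ).factorial : ℝ) * ((s + 1 : ℕ) : ℝ))⁻¹
    with hcst
  have hcstnn : 0 ≤ cst := by positivity
  set K := cst * (2 * π * R) ^ (s + 1) * I with hK
  have hKnn : 0 ≤ K := by positivity
  have hbound : ∀ x : EuclideanSpace ℝ (Fin n), ‖x‖ ≤ (2 * π * R)⁻¹ →
      ‖𝓕 a x‖ ≤ K * ‖x‖ ^ (s + 1) := by
    intro x hx
    have hx1 : 2 * π * R * ‖x‖ ≤ 1 := by
      calc 2 * π * R * ‖x‖ ≤ 2 * π * R * (2 * π * R)⁻¹ := by gcongr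
        _ = 1 := mul_inv_cancel₀ h2πR.ne'
    have hxnn : (0:ℝ) ≤ 2 * π * R * ‖x‖ := by positivity
    have hzc : Continuous fun ξ : EuclideanSpace ℝ (Fin n) =>
        ((-2 * π * (inner ℝ ξ x : ℝ) : ℝ) : ℂ) * Complex.I := by
      refine (Complex.continuous_ofReal.comp ?_).mul continuous_const
      exact continuous_const.mul (continuous_id.inner continuous_const)
    have hEa : Integrable (fun ξ => Complex.exp (((-2 * π * (inner ℝ ξ x : ℝ) : ℝ) : ℂ)
        * Complex.I) * a ξ) volume :=
      integrable_cont_mul haL1 hsupp (Complex.continuous_exp.comp hzc)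
    have hPc : Continuous fun ξ : EuclideanSpace ℝ (Fin n) =>
        ∑ m ∈ Finset.range (s + 1),
          (((-2 * π * (inner ℝ ξ x : ℝ) : ℝ) : ℂ) * Complex.I) ^ m / m.factorial := by
      refine continuous_finset_sum _ fun m _ => ?_
      exact (hzc.pow m).div_const _
    have hPa : Integrable (fun ξ => (∑ m ∈ Finset.range (s + 1),
        (((-2 * π * (inner ℝ ξ x : ℝ) : ℝ) : ℂ) * Complex.I) ^ m / m.factorial) * a ξ) volume :=
      integrable_cont_mul haL1 hsupp hPc
    have hPzero : ∫ ξ, (∑ m ∈ Finset.range (s + 1),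
        (((-2 * π * (inner ℝ ξ x : ℝ) : ℝ) : ℂ) * Complex.I) ^ m / m.factorial) * a ξ = 0 := by
      have hrw : (fun ξ : EuclideanSpace ℝ (Fin n) => (∑ m ∈ Finset.range (s + 1),
          (((-2 * π * (inner ℝ ξ x : ℝ) : ℝ) : ℂ) * Complex.I) ^ m / m.factorial) * a ξ)
          = fun ξ => ∑ m ∈ Finset.range (s + 1),
            (((-2 * π : ℝ) : ℂ) * Complex.I) ^ m / m.factorial *
              ((((inner ℝ ξ x : ℝ) : ℂ)) ^ m * a ξ) := by
        funext ξ
        rw [Finset.sum_mul]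
        refine Finset.sum_congr rfl fun m _ => ?_
        have hzeq : ((-2 * π * (inner ℝ ξ x : ℝ) : ℝ) : ℂ) * Complex.I
            = (((-2 * π : ℝ) : ℂ) * Complex.I) * (((inner ℝ ξ x : ℝ) : ℂ)) := by
          push_cast; ring
        rw [hzeq, mul_pow]; ring
      rw [hrw, integral_finset_sum]
      · refine Finset.sum_eq_zero fun m hm => ?_
        rw [integral_const_mul, moment_inner haL1 hsupp hmom x
          (Nat.lt_succ_iff.mp (Finset.mem_range.mp hm)), mul_zero]
      · intro m _
        have hc2 : Continuous fun ξ : EuclideanSpace ℝ (Fin n) =>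
            (((-2 * π : ℝ) : ℂ) * Complex.I) ^ m / m.factorial * (((inner ℝ ξ x : ℝ) : ℂ)) ^ m := by
          refine continuous_const.mul ?_
          exact (Complex.continuous_ofReal.comp
            (continuous_id.inner continuous_const)).pow m
        refine (integrable_cont_mul haL1 hsupp hc2).congr
          (Filter.Eventually.of_forall fun ξ => ?_)
        simp only [mul_assoc]
    have hFour : 𝓕 a x = ∫ ξ, (Complex.exp (((-2 * π * (inner ℝ ξ x : ℝ) : ℝ) : ℂ) * Complex.I)
        - ∑ m ∈ Finset.range (s + 1),
          (((-2 * π * (inner ℝ ξ x : ℝ) : ℝ) : ℂ) * Complex.I) ^ m / m.factorial) * a ξ := by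
      have h1 : ∫ ξ, (Complex.exp (((-2 * π * (inner ℝ ξ x : ℝ) : ℝ) : ℂ) * Complex.I)
          - ∑ m ∈ Finset.range (s + 1),
            (((-2 * π * (inner ℝ ξ x : ℝ) : ℝ) : ℂ) * Complex.I) ^ m / m.factorial) * a ξ
          = (∫ ξ, Complex.exp (((-2 * π * (inner ℝ ξ x : ℝ) : ℝ) : ℂ) * Complex.I) * a ξ)
            - ∫ ξ, (∑ m ∈ Finset.range (s + 1),
              (((-2 * π * (inner ℝ ξ x : ℝ) : ℝ) : ℂ) * Complex.I) ^ m / m.factorial) * a ξ := by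
        simp_rw [sub_mul]
        exact integral_sub hEa hPa
      rw [h1, hPzero, sub_zero, Real.fourier_eq']
      simp only [smul_eq_mul]
    rw [hFour]
    have hpt : ∀ ξ, ‖(Complex.exp (((-2 * π * (inner ℝ ξ x : ℝ) : ℝ) : ℂ) * Complex.I)
        - ∑ m ∈ Finset.range (s + 1),
          (((-2 * π * (inner ℝ ξ x : ℝ) : ℝ) : ℂ) * Complex.I) ^ m / m.factorial) * a ξ‖
        ≤ (cst * (2 * π * R) ^ (s + 1) * ‖x‖ ^ (s + 1)) * ‖a ξ‖ := by
      intro ξ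
      by_cases h : ξ ∈ Metric.closedBall c r
      · rw [norm_mul]
        have hξR : ‖ξ‖ ≤ R := by
          have h1 : dist ξ c ≤ r := Metric.mem_closedBall.mp h
          have h2 : ‖ξ‖ - ‖c‖ ≤ ‖ξ - c‖ := norm_sub_norm_le ξ c
          rw [dist_eq_norm] at h1
          rw [hRdef]; linarith
        have hw : |(inner ℝ ξ x : ℝ)| ≤ R * ‖x‖ :=
          (abs_real_inner_le_norm ξ x).trans
            (mul_le_mul_of_nonneg_right hξR (norm_nonneg x))
        have hz : ‖((-2 * π * (inner ℝ ξ x : ℝ) : ℝ) : ℂ) * Complex.I‖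
            ≤ 2 * π * R * ‖x‖ := by
          rw [norm_mul, Complex.norm_I, mul_one, Complex.norm_real, Real.norm_eq_abs, abs_mul]
          have habs : |(-2 : ℝ) * π| = 2 * π := by
            rw [abs_mul, abs_neg]; norm_num [abs_of_pos pi_pos]
          rw [habs]
          calc 2 * π * |(inner ℝ ξ x : ℝ)| ≤ 2 * π * (R * ‖x‖) :=
              mul_le_mul_of_nonneg_left hw (by positivity)
            _ = 2 * π * R * ‖x‖ := by ring
        have hz1 : ‖((-2 * π * (inner ℝ ξ x : ℝ) : ℝ) : ℂ) * Complex.I‖ ≤ 1 :=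
          hz.trans hx1
        have hb := Complex.exp_bound hz1 (Nat.succ_pos s)
        calc ‖Complex.exp (((-2 * π * (inner ℝ ξ x : ℝ) : ℝ) : ℂ) * Complex.I)
              - ∑ m ∈ Finset.range (s + 1),
                (((-2 * π * (inner ℝ ξ x : ℝ) : ℝ) : ℂ) * Complex.I) ^ m / m.factorial‖ * ‖a ξ‖
            ≤ (‖((-2 * π * (inner ℝ ξ x : ℝ) : ℝ) : ℂ) * Complex.I‖ ^ (s + 1)
                * (((s + 1 : ℕ).succ : ℝ) * (((s + 1 : ℕ).factorial : ℝ)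
                  * ((s + 1 : ℕ) : ℝ))⁻¹)) * ‖a ξ‖ := by
              exact mul_le_mul_of_nonneg_right (by exact_mod_cast hb) (norm_nonneg _)
          _ ≤ ((2 * π * R * ‖x‖) ^ (s + 1) * cst) * ‖a ξ‖ := by
              refine mul_le_mul_of_nonneg_right ?_ (norm_nonneg _)
              rw [hcst]
              refine mul_le_mul_of_nonneg_right ?_ (by positivity)
              exact pow_le_pow_left₀ (norm_nonneg _) hz (s + 1)
          _ = (cst * (2 * π * R) ^ (s + 1) * ‖x‖ ^ (s + 1)) * ‖a ξ‖ := by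
              rw [mul_pow]; ring
      · simp [ha0 ξ h]
    calc ‖∫ ξ, (Complex.exp (((-2 * π * (inner ℝ ξ x : ℝ) : ℝ) : ℂ) * Complex.I)
          - ∑ m ∈ Finset.range (s + 1),
            (((-2 * π * (inner ℝ ξ x : ℝ) : ℝ) : ℂ) * Complex.I) ^ m / m.factorial) * a ξ‖
        ≤ ∫ ξ, (cst * (2 * π * R) ^ (s + 1) * ‖x‖ ^ (s + 1)) * ‖a ξ‖ :=
          norm_integral_le_of_norm_le (haL1.norm.const_mul _)
            (Filter.Eventually.of_forall hpt)
      _ = K * ‖x‖ ^ (s + 1) := by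
          rw [integral_const_mul, hK, ← hIdef]; ring
  -- exponent facts
  have hν1 : ν < (s : ℝ) + 1 := by
    have h1 : (⌊ν⌋ : ℝ) ≤ (s : ℝ) := by exact_mod_cast hs
    have h2 := Int.lt_floor_add_one ν
    linarith
  have hepos : 0 < ((s : ℝ) + 1) - ν := by linarith
  refine squeeze_zero' (g := fun x : EuclideanSpace ℝ (Fin n) =>
    K * ‖x‖ ^ (((s : ℝ) + 1) - ν)) ?_ ?_ ?_
  · filter_upwards with x using div_nonneg (norm_nonneg _)
      (Real.rpow_nonneg (norm_nonneg _) _)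
  · have hball : ∀ᶠ x : EuclideanSpace ℝ (Fin n) in 𝓝[≠] (0 : EuclideanSpace ℝ (Fin n)),
        ‖x‖ ≤ (2 * π * R)⁻¹ := by
      have hmem : Metric.closedBall (0 : EuclideanSpace ℝ (Fin n)) ((2 * π * R)⁻¹)
          ∈ 𝓝 (0 : EuclideanSpace ℝ (Fin n)) :=
        Metric.closedBall_mem_nhds 0 (by positivity)
      have h' : ∀ᶠ x : EuclideanSpace ℝ (Fin n) in 𝓝 (0 : EuclideanSpace ℝ (Fin n)),
          ‖x‖ ≤ (2 * π * R)⁻¹ := by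
        filter_upwards [hmem] with x hx using mem_closedBall_zero_iff.mp hx
      exact h'.filter_mono nhdsWithin_le_nhds
    filter_upwards [hball, self_mem_nhdsWithin] with x hx hx0
    have hxne : x ≠ 0 := hx0
    have hxpos : 0 < ‖x‖ := norm_pos_iff.mpr hxne
    have h1 := hbound x hx
    have h2 : ‖𝓕 a x‖ / ‖x‖ ^ ν ≤ (K * ‖x‖ ^ (s + 1)) / ‖x‖ ^ ν := by
      gcongr
    refine h2.trans (le_of_eq ?_)
    have hnatpow : (‖x‖ : ℝ) ^ (s + 1) = ‖x‖ ^ (((s : ℝ)) + 1) := by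
      rw [← Real.rpow_natCast ‖x‖ (s + 1)]
      congr 1
      push_cast; ring
    rw [hnatpow, mul_div_assoc, ← Real.rpow_sub hxpos]
  · have h1 : Tendsto (fun x : EuclideanSpace ℝ (Fin n) => ‖x‖)
        (𝓝[≠] (0 : EuclideanSpace ℝ (Fin n))) (𝓝 0) := by
      have := (continuous_norm.tendsto (0 : EuclideanSpace ℝ (Fin n))).mono_left
        (nhdsWithin_le_nhds (s := {(0 : EuclideanSpace ℝ (Fin n))}ᶜ))
      simpa using this
    have h2 : ContinuousAt (fun t : ℝ => t ^ (((s : ℝ) + 1) - ν)) 0 :=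
      Real.continuousAt_rpow_const 0 _ (Or.inr hepos.le)
    have h3 := h2.tendsto.comp h1
    rw [Real.zero_rpow hepos.ne'] at h3
    have h4 := h3.const_mul K
    simpa using h4
end
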